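/- arXiv:1801.07777 — 2 statements merged into one kernel-verified Lean document; each statement's English description precedes it below -/
import Mathlib

section
/- Let (Ω, ℱ, P) be a probability space, W : Ω → 𝒲 a random variable taking values in a finite set 𝒲, B a measurable event with P(B) > 0, Y : Ω → 𝒴 a random variable taking values in a finite set 𝒴, y ∈ 𝒴 with P(B ∩ {Y = y}) > 0, and ζ a real number with 0 < ζ ≤ 1. Assume that for every w ∈ 𝒲 with P({W = w} ∩ B) > 0 one has P({Y = y} ∣ {W = w} ∩ B) ≥ ζ. Then 1 − max_{w ∈ 𝒲} P({W = w} ∣ B ∩ {Y = y}) ≥ ζ · (1 − max_{w ∈ 𝒲} P({W = w} ∣ B)). -/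
/-!
Write `p w = P({W = w} ∩ B)` and `q w = P({W = w} ∩ B ∩ {Y = y})`. The channel bound gives
`ζ p ≤ q` pointwise, so for every `w` the mass `q` puts off `w` is at least `ζ` times the mass
`p` puts off `w`. Normalising by `P(B ∩ {Y = y}) ≤ P(B)` only helps, hence every posterior
probability after observing `y` is at most `1 - ζ (1 - max_w P(W = w ∣ B))`.
-/

open MeasureTheory

/-- Conditional probability `P(A ∣ B) = P(A ∩ B) / P(B)` as a real number. -/
noncomputable def condProb {Ω : Type*} [MeasurableSpace Ω] (P : Measure Ω) (A B : Set Ω) : ℝ :=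
  (P (A ∩ B)).toReal / (P B).toReal

section Weights

variable {ι : Type*} [Fintype ι] {p q : ι → ℝ} {ζ : ℝ}

theorem mul_one_sub_div_sum_le (hq0 : ∀ i, 0 ≤ q i) (hpq : ∀ i, ζ * p i ≤ q i)
    (hq : 0 < ∑ j, q j) (hqp : ∑ j, q j ≤ ∑ j, p j) (i : ι) :
    ζ * (1 - p i / ∑ j, p j) ≤ 1 - q i / ∑ j, q j := by
  classical
  have hp : 0 < ∑ j, p j := hq.trans_le hqp
  have hrest_nonneg : 0 ≤ ∑ j, q j - q i := by
    rw [← Finset.sum_erase_eq_sub (Finset.mem_univ i)]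
    exact Finset.sum_nonneg fun j _ => hq0 j
  have hrest : ζ * (∑ j, p j - p i) ≤ ∑ j, q j - q i := by
    simp only [← Finset.sum_erase_eq_sub (Finset.mem_univ i), Finset.mul_sum]
    exact Finset.sum_le_sum fun j _ => hpq j
  calc ζ * (1 - p i / ∑ j, p j) = ζ * (∑ j, p j - p i) / ∑ j, p j := by field_simp
    _ ≤ (∑ j, q j - q i) / ∑ j, p j := by gcongr
    _ ≤ (∑ j, q j - q i) / ∑ j, q j := div_le_div_of_nonneg_left hrest_nonneg hq hqp
    _ = 1 - q i / ∑ j, q j := by field_simp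

theorem mul_one_sub_iSup_div_sum_le [Nonempty ι] (hζ : 0 ≤ ζ) (hq0 : ∀ i, 0 ≤ q i)
    (hpq : ∀ i, ζ * p i ≤ q i) (hq : 0 < ∑ j, q j) (hqp : ∑ j, q j ≤ ∑ j, p j) :
    ζ * (1 - ⨆ i, p i / ∑ j, p j) ≤ 1 - ⨆ i, q i / ∑ j, q j := by
  suffices ∀ i, q i / ∑ j, q j ≤ 1 - ζ * (1 - ⨆ i, p i / ∑ j, p j) by
    linarith [ciSup_le this]
  intro i
  have hle : p i / ∑ j, p j ≤ ⨆ i, p i / ∑ j, p j := 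
    le_ciSup (Finite.bddAbove_range fun i => p i / ∑ j, p j) i
  have : ζ * (1 - ⨆ i, p i / ∑ j, p j) ≤ ζ * (1 - p i / ∑ j, p j) := by gcongr
  linarith [mul_one_sub_div_sum_le hq0 hpq hq hqp i]

end Weights

section Measure

variable {Ω : Type*} [MeasurableSpace Ω] (P : Measure Ω)

theorem sum_toReal_measure_fiber_inter {𝒲 : Type*} [MeasurableSpace 𝒲]
    [MeasurableSingletonClass 𝒲] [Fintype 𝒲] [IsFiniteMeasure P] {W : Ω → 𝒲}
    (hW : Measurable W) (A : Set Ω) :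
    ∑ w, (P ({ω | W ω = w} ∩ A)).toReal = (P A).toReal := by
  have hfib : ∀ w ∈ (Finset.univ : Finset 𝒲), MeasurableSet (W ⁻¹' {w}) :=
    fun w _ => hW (measurableSet_singleton w)
  have := sum_measure_preimage_singleton (μ := P.restrict A) Finset.univ hfib
  simp only [Finset.coe_univ, Set.preimage_univ, Measure.restrict_apply_univ,
    Measure.restrict_apply (hfib _ (Finset.mem_univ _))] at this
  rw [← this, ENNReal.toReal_sum fun w _ => measure_ne_top P _]
  rfl

variable {P}

theorem mul_toReal_measure_le_of_le_condProb {A D : Set Ω} {ζ : ℝ}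
    (h : 0 < (P D).toReal → ζ ≤ condProb P A D) :
    ζ * (P D).toReal ≤ (P (A ∩ D)).toReal := by
  rcases ENNReal.toReal_nonneg.eq_or_lt with hD | hD
  · rw [← hD, mul_zero]
    exact ENNReal.toReal_nonneg
  · exact (le_div_iff₀ hD).1 (h hD)

end Measure

theorem posterior_error_change_bound_general {Ω 𝒲 𝒴 : Type*} [MeasurableSpace Ω]
    [MeasurableSpace 𝒲] [MeasurableSingletonClass 𝒲] [Fintype 𝒲] [Nonempty 𝒲]
    (P : Measure Ω) [IsProbabilityMeasure P]
    (W : Ω → 𝒲) (hW : Measurable W) (Y : Ω → 𝒴)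
    (B : Set Ω)
    (y : 𝒴) (hPBy : 0 < (P (B ∩ {ω | Y ω = y})).toReal)
    (ζ : ℝ) (hζ0 : 0 < ζ)
    (hmin : ∀ w : 𝒲, 0 < (P ({ω | W ω = w} ∩ B)).toReal →
      ζ ≤ condProb P {ω | Y ω = y} ({ω | W ω = w} ∩ B)) :
    ζ * (1 - ⨆ w : 𝒲, condProb P {ω | W ω = w} B) ≤
      1 - ⨆ w : 𝒲, condProb P {ω | W ω = w} (B ∩ {ω | Y ω = y}) := by
  set C := B ∩ {ω | Y ω = y}
  have hsumB := sum_toReal_measure_fiber_inter P hW B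
  have hsumC := sum_toReal_measure_fiber_inter P hW C
  have hchannel : ∀ w, ζ * (P ({ω | W ω = w} ∩ B)).toReal ≤ (P ({ω | W ω = w} ∩ C)).toReal := by
    intro w
    have := mul_toReal_measure_le_of_le_condProb (hmin w)
    rwa [Set.inter_left_comm, Set.inter_comm {ω | Y ω = y}] at this
  have hCB : (P C).toReal ≤ (P B).toReal :=
    ENNReal.toReal_mono (measure_ne_top P _) (measure_mono Set.inter_subset_left)
  have := mul_one_sub_iSup_div_sum_le hζ0.le (fun _ => ENNReal.toReal_nonneg) hchannel
    (hsumC ▸ hPBy) (hsumB ▸ hsumC ▸ hCB)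
  simpa only [condProb, hsumB, hsumC] using this

/-- If every conditional output probability is at least `ζ`, then the a posteriori error
probability `1 - max_w P(W = w ∣ ·)` after observing one more output is at least `ζ` times
the a posteriori error probability before. -/
theorem posterior_error_change_bound {Ω 𝒲 𝒴 : Type*} [MeasurableSpace Ω]
    [MeasurableSpace 𝒲] [MeasurableSingletonClass 𝒲] [Fintype 𝒲] [Nonempty 𝒲]
    [MeasurableSpace 𝒴] [MeasurableSingletonClass 𝒴] [Fintype 𝒴]
    (P : Measure Ω) [IsProbabilityMeasure P]
    (W : Ω → 𝒲) (hW : Measurable W) (Y : Ω → 𝒴) (hY : Measurable Y)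
    (B : Set Ω) (hB : MeasurableSet B) (hPB : 0 < (P B).toReal)
    (y : 𝒴) (hPBy : 0 < (P (B ∩ {ω | Y ω = y})).toReal)
    (ζ : ℝ) (hζ0 : 0 < ζ) (hζ1 : ζ ≤ 1)
    (hmin : ∀ w : 𝒲, 0 < (P ({ω | W ω = w} ∩ B)).toReal →
      ζ ≤ condProb P {ω | Y ω = y} ({ω | W ω = w} ∩ B)) :
    ζ * (1 - ⨆ w : 𝒲, condProb P {ω | W ω = w} B) ≤
      1 - ⨆ w : 𝒲, condProb P {ω | W ω = w} (B ∩ {ω | Y ω = y}) :=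
  posterior_error_change_bound_general P W hW Y B y hPBy ζ hζ0 hmin
end

section
/- Let 0 < p < 1/2 and define the ternary additive channel Q on ZMod 3 by Q(y|x1,x2) = 1 − 2p if y = x1 + x2 (mod 3) and Q(y|x1,x2) = p otherwise. Then the maximum of D_Q(x1,x2‖z1,z2) over all x1, z1, x2, z2 ∈ ZMod 3 equals (1 − 3p) · log₂((1 − 2p)/p); in particular this quantity is nonnegative, and it is also equal to each of the three restricted maxima D_1 = max D_Q(x1,x2‖z1,x2), D_2 = max D_Q(x1,x2‖x1,z2), and D_3 = max D_Q(x1,x2‖z1,z2). -/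
/-- The ternary additive MAC: `Q(y | x1, x2) = 1 - 2p` if `y = x1 + x2 (mod 3)`,
and `p` otherwise. -/
noncomputable def Qter (p : ℝ) (x1 x2 y : ZMod 3) : ℝ :=
  if y = x1 + x2 then 1 - 2 * p else p

/-- The divergence `D_Q(x1,x2 ‖ z1,z2) = Σ_y Q(y|x1,x2) log₂(Q(y|x1,x2)/Q(y|z1,z2))`
for the ternary additive MAC. -/
noncomputable def DQter (p : ℝ) (x1 x2 z1 z2 : ZMod 3) : ℝ :=
  ∑ y : ZMod 3, Qter p x1 x2 y * Real.logb 2 (Qter p x1 x2 y / Qter p z1 z2 y)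

lemma sum_zmod3 (f : ZMod 3 → ℝ) : ∑ y : ZMod 3, f y = f 0 + f 1 + f 2 :=
  Fin.sum_univ_three f

set_option linter.unnecessarySeqFocus false in
lemma DQter_eq (p : ℝ) (hp0 : 0 < p) (hp1 : p < 1/2) (x1 x2 z1 z2 : ZMod 3) :
    DQter p x1 x2 z1 z2 =
      if x1 + x2 = z1 + z2 then 0 else (1 - 3*p) * Real.logb 2 ((1 - 2*p)/p) := by
  have h2 : (0:ℝ) < 1 - 2*p := by linarith
  have hL : Real.logb 2 (p / (1 - 2*p)) = - Real.logb 2 ((1 - 2*p)/p) := by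
    rw [show p / (1 - 2*p) = ((1 - 2*p)/p)⁻¹ by rw [inv_div], Real.logb_inv]
  have hne : ∀ (c : Prop) [Decidable c], (if c then 1 - 2*p else p) ≠ 0 := by
    intro c _; split <;> [exact h2.ne'; exact hp0.ne']
  have hgen : ∀ s t : ZMod 3,
      (if (0:ZMod 3) = s then 1 - 2*p else p) *
        Real.logb 2 ((if (0:ZMod 3) = s then 1 - 2*p else p) / (if (0:ZMod 3) = t then 1 - 2*p else p)) +
      (if (1:ZMod 3) = s then 1 - 2*p else p) *
        Real.logb 2 ((if (1:ZMod 3) = s then 1 - 2*p else p) / (if (1:ZMod 3) = t then 1 - 2*p else p)) +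
      (if (2:ZMod 3) = s then 1 - 2*p else p) *
        Real.logb 2 ((if (2:ZMod 3) = s then 1 - 2*p else p) / (if (2:ZMod 3) = t then 1 - 2*p else p)) =
      if s = t then 0 else (1 - 3*p) * Real.logb 2 ((1 - 2*p)/p) := by
    intro s t
    rcases eq_or_ne s t with h | h
    · subst h
      rw [if_pos rfl]
      simp [div_self (hne _), mul_zero]
    · rw [if_neg h]
      have h3 : ∀ s : ZMod 3, s = 0 ∨ s = 1 ∨ s = 2 := by decide
      rcases h3 s with rfl | rfl | rfl <;> rcases h3 t with rfl | rfl | rfl <;>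
        first
          | exact absurd rfl h
          | (simp (config := { decide := true }) [div_self hp0.ne', div_self h2.ne', hL] <;> ring)
  unfold DQter Qter
  rw [sum_zmod3]
  exact hgen (x1 + x2) (z1 + z2)

lemma DQter_val_nonneg (p : ℝ) (hp0 : 0 < p) (hp1 : p < 1/2) :
    0 ≤ (1 - 3*p) * Real.logb 2 ((1 - 2*p)/p) := by
  have h2 : (0:ℝ) < 1 - 2*p := by linarith
  rcases le_or_gt p (1/3) with h | h
  · exact mul_nonneg (by linarith)
      (Real.logb_nonneg (by norm_num) ((one_le_div hp0).mpr (by linarith)))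
  · have hb : Real.logb 2 ((1 - 2*p)/p) ≤ 0 :=
      Real.logb_nonpos (by norm_num) (by positivity) ((div_le_one hp0).mpr (by linarith))
    nlinarith

/-- For the ternary additive MAC with `0 < p < 1/2`, the maximum of
`D_Q(x1,x2 ‖ z1,z2)` over all input quadruples equals `(1 - 3p) log₂((1-2p)/p)`; this
quantity is nonnegative and it equals each of the restricted maxima `D₁` (only the first
input changes), `D₂` (only the second input changes) and `D₃` (both may change). -/
theorem ternary_additive_divergence_max (p : ℝ) (hp0 : 0 < p) (hp1 : p < 1 / 2) :
    IsGreatest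
        (Set.range fun t : ZMod 3 × ZMod 3 × ZMod 3 × ZMod 3 =>
          DQter p t.1 t.2.1 t.2.2.1 t.2.2.2)
        ((1 - 3 * p) * Real.logb 2 ((1 - 2 * p) / p)) ∧
      0 ≤ (1 - 3 * p) * Real.logb 2 ((1 - 2 * p) / p) ∧
      IsGreatest
        (Set.range fun t : ZMod 3 × ZMod 3 × ZMod 3 => DQter p t.1 t.2.1 t.2.2 t.2.1)
        ((1 - 3 * p) * Real.logb 2 ((1 - 2 * p) / p)) ∧
      IsGreatest
        (Set.range fun t : ZMod 3 × ZMod 3 × ZMod 3 => DQter p t.1 t.2.1 t.1 t.2.2)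
        ((1 - 3 * p) * Real.logb 2 ((1 - 2 * p) / p)) ∧
      IsGreatest
        (Set.range fun t : ZMod 3 × ZMod 3 × ZMod 3 × ZMod 3 =>
          DQter p t.1 t.2.1 t.2.2.1 t.2.2.2)
        ((1 - 3 * p) * Real.logb 2 ((1 - 2 * p) / p)) := by
  have hnn := DQter_val_nonneg p hp0 hp1
  have hub : ∀ x1 x2 z1 z2 : ZMod 3,
      DQter p x1 x2 z1 z2 ≤ (1 - 3 * p) * Real.logb 2 ((1 - 2 * p) / p) := by
    intro x1 x2 z1 z2
    rw [DQter_eq p hp0 hp1]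
    split
    · exact hnn
    · exact le_refl _
  have hG3 : IsGreatest
      (Set.range fun t : ZMod 3 × ZMod 3 × ZMod 3 × ZMod 3 =>
        DQter p t.1 t.2.1 t.2.2.1 t.2.2.2)
      ((1 - 3 * p) * Real.logb 2 ((1 - 2 * p) / p)) := by
    constructor
    · refine ⟨(0, 0, 1, 0), ?_⟩
      show DQter p 0 0 1 0 = _
      rw [DQter_eq p hp0 hp1, if_neg (by decide)]
    · rintro x ⟨t, rfl⟩
      exact hub _ _ _ _
  refine ⟨hG3, hnn, ?_, ?_, hG3⟩
  · constructor
    · refine ⟨(0, 0, 1), ?_⟩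
      show DQter p 0 0 1 0 = _
      rw [DQter_eq p hp0 hp1, if_neg (by decide)]
    · rintro x ⟨t, rfl⟩
      exact hub _ _ _ _
  · constructor
    · refine ⟨(0, 0, 1), ?_⟩
      show DQter p 0 0 0 1 = _
      rw [DQter_eq p hp0 hp1, if_neg (by decide)]
    · rintro x ⟨t, rfl⟩
      exact hub _ _ _ _
end
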